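/- arXiv:1409.4676 — 6 statements merged into one kernel-verified Lean document; each statement's English description precedes it below -/
import Mathlib

section
/- Let M > 0 and sh > 0 be real numbers, set θ_c = 1 + (M·coth M − 1)/sh, and define a : (0,1] → ℝ by a(y) = sinh(M·y) / (θ_c · y · sinh M). Then θ_c > 1; a satisfies a''(y) + (2/y)·a'(y) = M²·a(y) for all y ∈ (0,1); a(1) = 1/θ_c; and a satisfies the external mass transfer (Robin) boundary condition a'(1) = sh·(1 − a(1)). -/
/-!
The profile is `(θ_c sinh M)⁻¹ · sinh (M y) / y`, and `sinh (M y) / y = u / y` with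
`u'' = M² u` is the classical radial solution of `f'' + (2 / y) f' = M² f`. The inequality
`θ_c > 1` is `tanh M < M`, which follows from the mean value theorem since `cosh` increases on
`[0, ∞)`; the Robin condition at `y = 1` is the defining relation
`sh (θ_c - 1) sinh M = M cosh M - sinh M` of `θ_c`.
-/

open Real Set Filter

namespace Real

theorem sinh_lt_mul_cosh {x : ℝ} (hx : 0 < x) : sinh x < x * cosh x := by
  obtain ⟨ξ, ⟨hξ0, hξx⟩, hξ⟩ := exists_hasDerivAt_eq_slope sinh cosh hx
    continuous_sinh.continuousOn fun y _ => hasDerivAt_sinh y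
  have hcosh : cosh ξ < cosh x := cosh_strictMonoOn hξ0.le hx.le hξx
  rw [sinh_zero, sub_zero, sub_zero, eq_div_iff hx.ne'] at hξ
  nlinarith

section SinhMulDiv

variable (M : ℝ) {y : ℝ}

theorem hasDerivAt_sinh_mul_div (hy : y ≠ 0) :
    HasDerivAt (fun y => sinh (M * y) / y) ((M * y * cosh (M * y) - sinh (M * y)) / y ^ 2) y := by
  have h := ((hasDerivAt_id y).const_mul M).sinh.div (hasDerivAt_id y) hy
  refine h.congr_deriv ?_
  simp only [id, mul_one]
  ring

/-- The second derivative of `sinh (M y) / y`, written as `M² f - (2 / y) f'`. -/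
theorem hasDerivAt_mul_cosh_mul_sub_sinh_div_sq (hy : y ≠ 0) :
    HasDerivAt (fun y => (M * y * cosh (M * y) - sinh (M * y)) / y ^ 2)
      (M ^ 2 * (sinh (M * y) / y) - 2 / y * ((M * y * cosh (M * y) - sinh (M * y)) / y ^ 2)) y := by
  have hMy := (hasDerivAt_id y).const_mul M
  have h := ((hMy.mul hMy.cosh).sub hMy.sinh).div ((hasDerivAt_id y).pow 2) (pow_ne_zero 2 hy)
  refine h.congr_deriv ?_
  simp only [Pi.mul_apply, Pi.sub_apply, Pi.pow_apply, id, mul_one]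
  field_simp
  ring

theorem deriv_deriv_sinh_mul_div_add (hy : y ≠ 0) :
    deriv (deriv fun y => sinh (M * y) / y) y + 2 / y * deriv (fun y => sinh (M * y) / y) y =
      M ^ 2 * (sinh (M * y) / y) := by
  have hderiv : deriv (fun y => sinh (M * y) / y) =ᶠ[nhds y]
      fun y => (M * y * cosh (M * y) - sinh (M * y)) / y ^ 2 := by
    filter_upwards [eventually_ne_nhds hy] with z hz
    exact (hasDerivAt_sinh_mul_div M hz).deriv
  rw [hderiv.deriv_eq, (hasDerivAt_mul_cosh_mul_sub_sinh_div_sq M hy).deriv,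
    hderiv.eq_of_nhds]
  ring

end SinhMulDiv

end Real

/-- Quantized-method first-stage concentration profile for the grain model in a
spherical pellet with external mass transfer resistance (Robin boundary
condition), where `coth M = cosh M / sinh M`. -/
theorem stmt1 (M sh : ℝ) (hM : 0 < M) (hsh : 0 < sh)
    (θc : ℝ) (hθc : θc = 1 + (M * (Real.cosh M / Real.sinh M) - 1) / sh)
    (a : ℝ → ℝ) (ha : ∀ y, a y = Real.sinh (M * y) / (θc * y * Real.sinh M)) :
    1 < θc ∧
    (∀ y ∈ Set.Ioo (0:ℝ) 1,
      deriv (deriv a) y + (2 / y) * deriv a y = M ^ 2 * a y) ∧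
    a 1 = 1 / θc ∧
    deriv a 1 = sh * (1 - a 1) := by
  have hsinh : 0 < sinh M := sinh_pos_iff.mpr hM
  have hθ : 1 < θc := by
    have hcoth : 1 < M * (cosh M / sinh M) := by
      rw [← mul_div_assoc, one_lt_div hsinh]
      exact sinh_lt_mul_cosh hM
    rw [hθc, lt_add_iff_pos_right]
    exact div_pos (sub_pos.mpr hcoth) hsh
  have ha' : a = fun y => (θc * sinh M)⁻¹ * (sinh (M * y) / y) :=
    funext fun y => by rw [ha]; ring
  refine ⟨hθ, fun y hy => ?_, ?_, ?_⟩
  · rw [ha', deriv_const_mul_field', deriv_const_mul_field']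
    linear_combination (θc * sinh M)⁻¹ * deriv_deriv_sinh_mul_div_add M hy.1.ne'
  · rw [ha]
    field_simp
  · rw [ha', deriv_const_mul_field, (hasDerivAt_sinh_mul_div M one_ne_zero).deriv]
    have hrobin : sh * (θc - 1) * sinh M = M * cosh M - sinh M := by
      rw [hθc]
      field_simp
      ring
    simp only [mul_one, one_pow, div_one]
    field_simp [(zero_lt_one.trans hθ).ne']
    linear_combination -hrobin
end

section
/- Let a > 0, σ ≥ 0 and Z > 0 with Z ≠ 1 be real constants, let T > 0, and suppose r : [0, T] → (0, 1] is differentiable with r(0) = 1 and r'(θ) = −a / (1 + 6σ²·(r(θ) − r(θ)²/(Z + (1 − Z)·r(θ)³)^{1/3})) for all θ ∈ [0, T]. Then Z + (1 − Z)·r(θ)³ > 0 for all θ ∈ [0, T], and for all θ ∈ [0, T]: r(θ) + 3σ²·r(θ)² + (3σ²/(Z − 1))·(Z + (1 − Z)·r(θ)³)^{2/3} = 1 + 3σ² + 3σ²/(Z − 1) − a·θ. -/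
open Real Set

/-! The grain potential `G(r) = r + 3σ²r² + 3σ²/(Z - 1) · (Z + (1 - Z) r³)^{2/3}` is an
antiderivative of the denominator `1 + 6σ²(r - r²/r**)` of the kinetic law, so along a solution
`(G ∘ r)' = G'(r) · r' = -a` and `G(r(θ)) = G(1) - aθ`. The cancellation is legitimate because the
denominator is positive: `r ≤ r**` when `r ∈ [0, 1]` and `Z ≥ 0`. -/

/-- The cube `r**³` of the dimensionless outer grain radius. -/
def grainVolume (Z r : ℝ) : ℝ := Z + (1 - Z) * r ^ 3

noncomputable def grainPotential (σ Z r : ℝ) : ℝ :=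
  r + 3 * σ ^ 2 * r ^ 2 + 3 * σ ^ 2 / (Z - 1) * grainVolume Z r ^ ((2 : ℝ) / 3)

section grain

variable {σ Z r : ℝ}

lemma pow_three_le_grainVolume (hZ : 0 ≤ Z) (h0 : 0 ≤ r) (h1 : r ≤ 1) :
    r ^ 3 ≤ grainVolume Z r := by
  have : r ^ 3 ≤ 1 := pow_le_one₀ h0 h1
  unfold grainVolume
  nlinarith

lemma grainVolume_pos (hZ : 0 ≤ Z) (h0 : 0 < r) (h1 : r ≤ 1) : 0 < grainVolume Z r :=
  (pow_pos h0 3).trans_le (pow_three_le_grainVolume hZ h0.le h1)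

lemma le_grainVolume_rpow_one_third (hZ : 0 ≤ Z) (h0 : 0 ≤ r) (h1 : r ≤ 1) :
    r ≤ grainVolume Z r ^ ((1 : ℝ) / 3) :=
  calc r = (r ^ 3) ^ ((1 : ℝ) / 3) := by
        rw [← Real.rpow_natCast, ← Real.rpow_mul h0]; norm_num
    _ ≤ grainVolume Z r ^ ((1 : ℝ) / 3) :=
        Real.rpow_le_rpow (by positivity) (pow_three_le_grainVolume hZ h0 h1) (by norm_num)

lemma one_add_mul_sub_sq_div_pos (σ : ℝ) {r w : ℝ} (h0 : 0 ≤ r) (hw : 0 < w) (hrw : r ≤ w) :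
    0 < 1 + 6 * σ ^ 2 * (r - r ^ 2 / w) := by
  have : r ^ 2 / w ≤ r := by
    rw [div_le_iff₀ hw]
    nlinarith
  have : 0 ≤ 6 * σ ^ 2 * (r - r ^ 2 / w) := by
    apply mul_nonneg <;> [positivity; linarith]
  linarith

lemma hasDerivAt_grainPotential (hZ1 : Z ≠ 1) (hV : 0 < grainVolume Z r) :
    HasDerivAt (grainPotential σ Z)
      (1 + 6 * σ ^ 2 * (r - r ^ 2 / grainVolume Z r ^ ((1 : ℝ) / 3))) r := by
  have hV' : HasDerivAt (grainVolume Z) ((1 - Z) * (3 * r ^ 2)) r := by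
    unfold grainVolume
    simpa using ((hasDerivAt_pow 3 r).const_mul (1 - Z)).const_add Z
  have hG : HasDerivAt (fun y => y + 3 * σ ^ 2 * y ^ 2
      + 3 * σ ^ 2 / (Z - 1) * grainVolume Z y ^ ((2 : ℝ) / 3)) _ r :=
    ((hasDerivAt_id r).add ((hasDerivAt_pow 2 r).const_mul (3 * σ ^ 2))).add
      ((hV'.rpow_const (p := (2 : ℝ) / 3) (Or.inl hV.ne')).const_mul (3 * σ ^ 2 / (Z - 1)))
  refine hG.congr_deriv ?_
  -- `V^{2/3 - 1} = 1 / V^{1/3}`, and `(1 - Z)/(Z - 1) = -1`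
  have hw : grainVolume Z r ^ ((2 : ℝ) / 3 - 1) = (grainVolume Z r ^ ((1 : ℝ) / 3))⁻¹ := by
    rw [show (2 : ℝ) / 3 - 1 = -(1 / 3) by norm_num, Real.rpow_neg hV.le]
  have hw0 : grainVolume Z r ^ ((1 : ℝ) / 3) ≠ 0 := (Real.rpow_pos_of_pos hV _).ne'
  have hZ1' : Z - 1 ≠ 0 := sub_ne_zero.2 hZ1
  rw [hw]
  field_simp
  ring

end grain

lemma eq_sub_mul_of_hasDerivAt_eq_neg {f : ℝ → ℝ} {a b c : ℝ}
    (hf : ∀ x ∈ Icc a b, HasDerivAt f (-c) x) : ∀ x ∈ Icc a b, f x = f a - c * (x - a) := by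
  refine eq_of_has_deriv_right_eq (f' := fun _ => -c)
    (fun x hx => (hf x (Ico_subset_Icc_self hx)).hasDerivWithinAt) (fun x _ => ?_)
    (fun x hx => (hf x hx).continuousAt.continuousWithinAt) (by fun_prop) (by ring)
  simpa using (((hasDerivAt_id x).sub_const a).const_mul c).const_sub (f a) |>.hasDerivWithinAt

theorem stmt7_general (a σ Z T : ℝ) (hZ : 0 < Z)
    (hZ1 : Z ≠ 1)
    (r : ℝ → ℝ)
    (hrange : ∀ θ ∈ Set.Icc (0:ℝ) T, r θ ∈ Set.Ioc (0:ℝ) 1)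
    (hr0 : r 0 = 1)
    (hderiv : ∀ θ ∈ Set.Icc (0:ℝ) T,
      HasDerivAt r
        (-a / (1 + 6 * σ ^ 2 *
          (r θ - (r θ) ^ 2 / (Z + (1 - Z) * (r θ) ^ 3) ^ ((1:ℝ) / 3)))) θ) :
    (∀ θ ∈ Set.Icc (0:ℝ) T, 0 < Z + (1 - Z) * (r θ) ^ 3) ∧
    (∀ θ ∈ Set.Icc (0:ℝ) T,
      r θ + 3 * σ ^ 2 * (r θ) ^ 2
        + (3 * σ ^ 2 / (Z - 1)) * (Z + (1 - Z) * (r θ) ^ 3) ^ ((2:ℝ) / 3)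
        = 1 + 3 * σ ^ 2 + 3 * σ ^ 2 / (Z - 1) - a * θ) := by
  have hV : ∀ θ ∈ Icc (0 : ℝ) T, 0 < grainVolume Z (r θ) := fun θ hθ =>
    grainVolume_pos hZ.le (hrange θ hθ).1 (hrange θ hθ).2
  have hGr : ∀ θ ∈ Icc (0 : ℝ) T, HasDerivAt (grainPotential σ Z ∘ r) (-a) θ := by
    intro θ hθ
    obtain ⟨h0, h1⟩ := hrange θ hθ
    have hD := one_add_mul_sub_sq_div_pos σ h0.le (Real.rpow_pos_of_pos (hV θ hθ) _)
      (le_grainVolume_rpow_one_third hZ.le h0.le h1)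
    have hr' : HasDerivAt r (-a / (1 + 6 * σ ^ 2 *
        (r θ - r θ ^ 2 / grainVolume Z (r θ) ^ ((1 : ℝ) / 3)))) θ := hderiv θ hθ
    exact ((hasDerivAt_grainPotential hZ1 (hV θ hθ)).comp θ hr').congr_deriv
      (mul_div_cancel₀ _ hD.ne')
  refine ⟨hV, fun θ hθ => ?_⟩
  have h := eq_sub_mul_of_hasDerivAt_eq_neg hGr θ hθ
  simpa [grainPotential, grainVolume, hr0] using h

/-- Modified grain model (grain model with structural changes): the implicit
integrated form of the kinetic law
`r' = -a / (1 + 6σ²(r - r²/(Z + (1-Z)r³)^(1/3)))`, `r 0 = 1`. -/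
theorem stmt7 (a σ Z T : ℝ) (ha : 0 < a) (hσ : 0 ≤ σ) (hZ : 0 < Z)
    (hZ1 : Z ≠ 1) (hT : 0 < T)
    (r : ℝ → ℝ)
    (hrange : ∀ θ ∈ Set.Icc (0:ℝ) T, r θ ∈ Set.Ioc (0:ℝ) 1)
    (hr0 : r 0 = 1)
    (hderiv : ∀ θ ∈ Set.Icc (0:ℝ) T,
      HasDerivAt r
        (-a / (1 + 6 * σ ^ 2 *
          (r θ - (r θ) ^ 2 / (Z + (1 - Z) * (r θ) ^ 3) ^ ((1:ℝ) / 3)))) θ) :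
    (∀ θ ∈ Set.Icc (0:ℝ) T, 0 < Z + (1 - Z) * (r θ) ^ 3) ∧
    (∀ θ ∈ Set.Icc (0:ℝ) T,
      r θ + 3 * σ ^ 2 * (r θ) ^ 2
        + (3 * σ ^ 2 / (Z - 1)) * (Z + (1 - Z) * (r θ) ^ 3) ^ ((2:ℝ) / 3)
        = 1 + 3 * σ ^ 2 + 3 * σ ^ 2 / (Z - 1) - a * θ) :=
  stmt7_general a σ Z T hZ hZ1 r hrange hr0 hderiv
end

section
/- Let a > 0 and Ψ > 0 be real constants and define b : [0, ∞) → ℝ by b(θ) = exp((1 − (1 + Ψ·a·θ/2)²)/Ψ). Then b(0) = 1, 0 < b(θ) ≤ 1 for all θ ≥ 0, the quantity 1 − Ψ·ln b(θ) = (1 + Ψ·a·θ/2)² is nonnegative, and b satisfies b'(θ) = −a·b(θ)·√(1 − Ψ·ln b(θ)) for all θ ≥ 0. -/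
open Real Set

/-! With `u θ = 1 + Ψaθ/2` the profile is `b = exp ((1 - u²)/Ψ)`, so `1 - Ψ ln b = u²` exactly,
and the chain rule gives `b' = -(2/Ψ) u u' b = -a u b`. Since `u ≥ 1` for `θ ≥ 0`, `u = √(u²)`
and `b ≤ 1`, which is the claimed equation. -/

lemma one_sub_mul_log_exp_one_sub_sq_div {Ψ : ℝ} (hΨ : Ψ ≠ 0) (u : ℝ) :
    1 - Ψ * log (exp ((1 - u ^ 2) / Ψ)) = u ^ 2 := by
  rw [log_exp]
  field_simp
  ring

lemma exp_one_sub_sq_div_le_one {Ψ u : ℝ} (hΨ : 0 ≤ Ψ) (hu : 1 ≤ u ^ 2) :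
    exp ((1 - u ^ 2) / Ψ) ≤ 1 :=
  exp_le_one_iff.2 (div_nonpos_of_nonpos_of_nonneg (by linarith) hΨ)

lemma hasDerivAt_exp_one_sub_sq_div {Ψ : ℝ} (hΨ : Ψ ≠ 0) (a θ : ℝ) :
    HasDerivAt (fun t => exp ((1 - (1 + Ψ * a * t / 2) ^ 2) / Ψ))
      (-a * exp ((1 - (1 + Ψ * a * θ / 2) ^ 2) / Ψ) * (1 + Ψ * a * θ / 2)) θ := by
  have hu : HasDerivAt (fun t => 1 + Ψ * a * t / 2) (Ψ * a / 2) θ := by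
    simpa using (((hasDerivAt_id θ).const_mul (Ψ * a)).div_const 2).const_add 1
  refine (((hu.pow 2).const_sub 1).div_const Ψ).exp.congr_deriv ?_
  simp only [Pi.pow_apply]
  field_simp
  ring

/-- Random pore model without product layer resistance (β = 0):
`b θ = exp((1 - (1 + Ψaθ/2)²)/Ψ)` solves `b' = -a b √(1 - Ψ ln b)` with
`b 0 = 1`. -/
theorem stmt8 (a Ψ : ℝ) (ha : 0 < a) (hΨ : 0 < Ψ)
    (b : ℝ → ℝ)
    (hb : ∀ θ, b θ = Real.exp ((1 - (1 + Ψ * a * θ / 2) ^ 2) / Ψ)) :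
    b 0 = 1 ∧
    (∀ θ : ℝ, 0 ≤ θ → 0 < b θ ∧ b θ ≤ 1) ∧
    (∀ θ : ℝ, 0 ≤ θ →
      1 - Ψ * Real.log (b θ) = (1 + Ψ * a * θ / 2) ^ 2 ∧
      0 ≤ 1 - Ψ * Real.log (b θ)) ∧
    (∀ θ : ℝ, 0 ≤ θ →
      deriv b θ = -a * b θ * Real.sqrt (1 - Ψ * Real.log (b θ))) := by
  obtain rfl : b = fun θ => exp ((1 - (1 + Ψ * a * θ / 2) ^ 2) / Ψ) := funext hb
  have hlog θ := one_sub_mul_log_exp_one_sub_sq_div hΨ.ne' (1 + Ψ * a * θ / 2)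
  have hu {θ : ℝ} (hθ : 0 ≤ θ) : 1 ≤ 1 + Ψ * a * θ / 2 := by
    have := mul_nonneg (mul_pos hΨ ha).le hθ
    linarith
  refine ⟨by simp, fun θ hθ => ⟨exp_pos _, ?_⟩, fun θ _ => ⟨hlog θ, hlog θ ▸ sq_nonneg _⟩,
    fun θ hθ => ?_⟩
  · exact exp_one_sub_sq_div_le_one hΨ.le (one_le_pow₀ (hu hθ))
  · rw [(hasDerivAt_exp_one_sub_sq_div hΨ.ne' a θ).deriv, hlog θ,
      sqrt_sq (zero_le_one.trans (hu hθ))]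
end

section
/- Let a > 0, Ψ > 0, β ≥ 0 and Z ≥ 0 be real constants, set c = β·Z/Ψ, let T > 0, and suppose b : [0, T] → (0, 1] is differentiable with b(0) = 1 and b'(θ) = −a·b(θ)·√(1 − Ψ·ln b(θ)) / (1 + c·(√(1 − Ψ·ln b(θ)) − 1)) for all θ ∈ [0, T]. Then the denominator 1 + c·(√(1 − Ψ·ln b(θ)) − 1) ≥ 1 for all θ, and for all θ ∈ [0, T]: (2/Ψ)·(1 − c)·(1 − √(1 − Ψ·ln b(θ))) + c·ln b(θ) = −a·θ. -/
open Real Set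

/-!
Along a solution, `log b ≤ 0`, so `s = √(1 - Ψ log b) ≥ 1` and the denominator `1 + c (s - 1)` is
at least `1`. The function `G y = (2/Ψ)(1 - c)(1 - √(1 - Ψ log y)) + c log y` has derivative
`(1 + c (s - 1)) / (y s)`, the reciprocal of the kinetic law's right-hand side up to the factor `-a`;
hence `G ∘ b` has constant derivative `-a`, and `G (b θ) = G 1 - a θ = -a θ`.
-/

noncomputable def randomPoreIntegral (Ψ c y : ℝ) : ℝ :=
  2 / Ψ * (1 - c) * (1 - √(1 - Ψ * log y)) + c * log y

theorem one_le_one_sub_mul_log {Ψ y : ℝ} (hΨ : 0 ≤ Ψ) (hy : y ∈ Ioc 0 1) :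
    1 ≤ 1 - Ψ * log y := by
  have hlog : log y ≤ 0 := log_nonpos hy.1.le hy.2
  nlinarith

theorem hasDerivAt_randomPoreIntegral {Ψ c y : ℝ} (hΨ : Ψ ≠ 0) (hy : 0 < y)
    (hpos : 0 < 1 - Ψ * log y) :
    HasDerivAt (randomPoreIntegral Ψ c)
      ((1 + c * (√(1 - Ψ * log y) - 1)) / (y * √(1 - Ψ * log y))) y := by
  have hlog : HasDerivAt log y⁻¹ y := hasDerivAt_log hy.ne'
  have hsqrt := ((hlog.const_mul Ψ).const_sub 1).sqrt hpos.ne'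
  refine (((hsqrt.const_sub 1).const_mul (2 / Ψ * (1 - c))).add
    (hlog.const_mul c)).congr_deriv ?_
  have hs : √(1 - Ψ * log y) ≠ 0 := (sqrt_pos.2 hpos).ne'
  field_simp
  ring

theorem hasDerivAt_randomPoreIntegral_comp {a Ψ c θ : ℝ} {b : ℝ → ℝ} (hΨ : Ψ ≠ 0)
    (hb : 0 < b θ) (hpos : 0 < 1 - Ψ * log (b θ))
    (hden : 1 + c * (√(1 - Ψ * log (b θ)) - 1) ≠ 0)
    (hderiv : HasDerivAt b
      (-a * b θ * √(1 - Ψ * log (b θ)) / (1 + c * (√(1 - Ψ * log (b θ)) - 1))) θ) :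
    HasDerivAt (fun t => randomPoreIntegral Ψ c (b t)) (-a) θ := by
  refine ((hasDerivAt_randomPoreIntegral hΨ hb hpos).comp θ hderiv).congr_deriv ?_
  have hs : √(1 - Ψ * log (b θ)) ≠ 0 := (sqrt_pos.2 hpos).ne'
  field_simp

theorem eq_add_mul_sub_of_hasDerivAt {f : ℝ → ℝ} {k l r : ℝ}
    (hf : ∀ x ∈ Icc l r, HasDerivAt f k x) :
    ∀ x ∈ Icc l r, f x = f l + k * (x - l) := by
  have hline : ∀ x, HasDerivAt (fun x => f l + k * (x - l)) k x := fun x => by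
    simpa using ((hasDerivAt_id x).sub_const l).const_mul k |>.const_add (f l)
  refine eq_of_has_deriv_right_eq (fun x hx => (hf x (Ico_subset_Icc_self hx)).hasDerivWithinAt)
    (fun x _ => (hline x).hasDerivWithinAt)
    (fun x hx => (hf x hx).continuousAt.continuousWithinAt)
    (fun x _ => (hline x).continuousAt.continuousWithinAt) (by simp)

theorem stmt9_general (a Ψ β Z c T : ℝ) (hΨ : 0 < Ψ) (hβ : 0 ≤ β)
    (hZ : 0 ≤ Z) (hc : c = β * Z / Ψ)
    (b : ℝ → ℝ)
    (hrange : ∀ θ ∈ Set.Icc (0:ℝ) T, b θ ∈ Set.Ioc (0:ℝ) 1)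
    (hb0 : b 0 = 1)
    (hderiv : ∀ θ ∈ Set.Icc (0:ℝ) T,
      HasDerivAt b
        (-a * b θ * Real.sqrt (1 - Ψ * Real.log (b θ)) /
          (1 + c * (Real.sqrt (1 - Ψ * Real.log (b θ)) - 1))) θ) :
    (∀ θ ∈ Set.Icc (0:ℝ) T,
      1 ≤ 1 + c * (Real.sqrt (1 - Ψ * Real.log (b θ)) - 1)) ∧
    (∀ θ ∈ Set.Icc (0:ℝ) T,
      (2 / Ψ) * (1 - c) * (1 - Real.sqrt (1 - Ψ * Real.log (b θ)))
        + c * Real.log (b θ) = -a * θ) := by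
  have hc0 : 0 ≤ c := hc ▸ by positivity
  have hrad θ (hθ : θ ∈ Icc 0 T) : 1 ≤ 1 - Ψ * log (b θ) :=
    one_le_one_sub_mul_log hΨ.le (hrange θ hθ)
  have hsqrt θ (hθ : θ ∈ Icc 0 T) : 1 ≤ √(1 - Ψ * log (b θ)) := one_le_sqrt.2 (hrad θ hθ)
  have hden θ (hθ : θ ∈ Icc 0 T) : 1 ≤ 1 + c * (√(1 - Ψ * log (b θ)) - 1) :=
    le_add_of_nonneg_right (mul_nonneg hc0 (sub_nonneg.2 (hsqrt θ hθ)))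
  refine ⟨hden, fun θ hθ => ?_⟩
  have hG := eq_add_mul_sub_of_hasDerivAt (fun x hx =>
    hasDerivAt_randomPoreIntegral_comp hΨ.ne' (hrange x hx).1 (by linarith [hrad x hx])
      (by linarith [hden x hx]) (hderiv x hx)) θ hθ
  simpa [randomPoreIntegral, hb0] using hG

/-- Random pore model with product layer resistance: the implicit integrated
form of `b' = -a b √(1 - Ψ ln b) / (1 + c(√(1 - Ψ ln b) - 1))`, `b 0 = 1`,
with `c = βZ/Ψ`, is `(2/Ψ)(1-c)(1 - √(1 - Ψ ln b)) + c ln b = -aθ`. -/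
theorem stmt9 (a Ψ β Z c T : ℝ) (ha : 0 < a) (hΨ : 0 < Ψ) (hβ : 0 ≤ β)
    (hZ : 0 ≤ Z) (hc : c = β * Z / Ψ) (hT : 0 < T)
    (b : ℝ → ℝ)
    (hrange : ∀ θ ∈ Set.Icc (0:ℝ) T, b θ ∈ Set.Ioc (0:ℝ) 1)
    (hb0 : b 0 = 1)
    (hderiv : ∀ θ ∈ Set.Icc (0:ℝ) T,
      HasDerivAt b
        (-a * b θ * Real.sqrt (1 - Ψ * Real.log (b θ)) /
          (1 + c * (Real.sqrt (1 - Ψ * Real.log (b θ)) - 1))) θ) :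
    (∀ θ ∈ Set.Icc (0:ℝ) T,
      1 ≤ 1 + c * (Real.sqrt (1 - Ψ * Real.log (b θ)) - 1)) ∧
    (∀ θ ∈ Set.Icc (0:ℝ) T,
      (2 / Ψ) * (1 - c) * (1 - Real.sqrt (1 - Ψ * Real.log (b θ)))
        + c * Real.log (b θ) = -a * θ) :=
  stmt9_general a Ψ β Z c T hΨ hβ hZ hc b hrange hb0 hderiv
end

section
/- Let ψ_A > 0 and ψ_C > 0 be real constants, set s = ψ_A + ψ_C, and define b(θ) = exp(−s·θ) and b_A(θ) = 1 − (ψ_A/s)·(1 − exp(−s·θ)). Then for all θ > 0: b_A(θ) − b(θ) > 0 and (1 − b_A(θ)) / (b_A(θ) − b(θ)) = ψ_A / ψ_C; in particular the local selectivity is constant in time. -/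
/-! The conversions due to A and C are the fixed fractions `ψA / s` and `ψC / s` of the total
conversion `1 - exp (-s * θ)`, so their ratio does not depend on `θ`. -/

open Real Set

lemma one_sub_exp_neg_mul_pos {s θ : ℝ} (hs : 0 < s) (hθ : 0 < θ) :
    0 < 1 - exp (-s * θ) := by
  have : exp (-s * θ) < 1 := exp_lt_one_iff.mpr (by nlinarith)
  linarith

lemma one_sub_mul_one_sub_sub_eq {p q e : ℝ} (h : p + q = 1) :
    1 - p * (1 - e) - e = q * (1 - e) := by
  linear_combination (e - 1) * h

/-- Simultaneous reactions of one porous solid with two gases A and C: the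
local selectivity `(1 - b_A)/(b_A - b)` is constant in time and equals
`ψ_A/ψ_C`. -/
theorem stmt11 (ψA ψC s : ℝ) (hψA : 0 < ψA) (hψC : 0 < ψC)
    (hs : s = ψA + ψC)
    (b bA : ℝ → ℝ)
    (hb : ∀ θ, b θ = Real.exp (-s * θ))
    (hbA : ∀ θ, bA θ = 1 - (ψA / s) * (1 - Real.exp (-s * θ))) :
    ∀ θ : ℝ, 0 < θ →
      0 < bA θ - b θ ∧ (1 - bA θ) / (bA θ - b θ) = ψA / ψC := by
  intro θ hθ
  have hs0 : 0 < s := hs ▸ add_pos hψA hψC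
  have hfrac : ψA / s + ψC / s = 1 := by rw [← add_div, ← hs, div_self hs0.ne']
  have hconvA : 1 - bA θ = ψA / s * (1 - exp (-s * θ)) := by rw [hbA]; ring
  have hconvC : bA θ - b θ = ψC / s * (1 - exp (-s * θ)) := by
    rw [hbA, hb]; exact one_sub_mul_one_sub_sub_eq hfrac
  have hpos := one_sub_exp_neg_mul_pos hs0 hθ
  refine ⟨by rw [hconvC]; positivity, ?_⟩
  rw [hconvA, hconvC, mul_div_mul_right _ _ hpos.ne', div_div_div_cancel_right₀ hs0.ne']
end

section
/- Let Pe > 0, β > 0, Λ > 0 and a_s ∈ ℝ be real constants. Set r₁ = (Pe + √(Pe² + 4β))/2, r₂ = (Pe − √(Pe² + 4β))/2, E = exp((r₂ − r₁)·Λ), and D = Pe − Pe·(r₂/r₁)·E − r₂ + r₂·E. Then r₁ > 0 > r₂, D > 0, and the function Y(η) = (Pe·(1 − a_s)/D)·(exp(r₂·η) − (r₂/r₁)·E·exp(r₁·η)) + a_s satisfies: (i) Y''(η) − Pe·Y'(η) = β·(Y(η) − a_s) for all η ∈ ℝ; (ii) the Danckwerts inlet condition Y(0) − (1/Pe)·Y'(0)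 = 1; and (iii) the outlet condition Y'(Λ) = 0. -/
/-!
The exponents `r₁ > 0 > r₂` are the roots of the characteristic polynomial `r² - Pe r - β`
(their product is `-β < 0`), so `Y - aₛ`, a combination of `exp (r₂ η)` and `exp (r₁ η)`, solves
the homogeneous equation. The ratio `-(r₂ / r₁) E` of the two coefficients is what makes
`Y'(Λ) = 0`, and the prefactor `Pe (1 - aₛ) / D` is then forced by the inlet condition.
Writing `D = Pe (1 - (r₂ / r₁) E) - r₂ (1 - E)` with `0 < E ≤ 1` shows `D > 0`.
-/

open Real

noncomputable def expPair (A B r s : ℝ) (x : ℝ) : ℝ := A * exp (r * x) + B * exp (s * x)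

section ExpPair

variable (A B r s : ℝ)

lemma hasDerivAt_expPair (x : ℝ) :
    HasDerivAt (expPair A B r s) (expPair (A * r) (B * s) r s x) x := by
  have hr := ((hasDerivAt_id x).const_mul r).exp.const_mul A
  have hs := ((hasDerivAt_id x).const_mul s).exp.const_mul B
  refine (hr.add hs).congr_deriv ?_
  simp only [expPair, id]
  ring

lemma deriv_expPair : deriv (expPair A B r s) = expPair (A * r) (B * s) r s :=
  funext fun x => (hasDerivAt_expPair A B r s x).deriv

variable {A B r s}

lemma deriv_deriv_expPair_sub_mul_deriv {p β : ℝ} (hr : r ^ 2 = p * r + β)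
    (hs : s ^ 2 = p * s + β) (x : ℝ) :
    deriv (deriv (expPair A B r s)) x - p * deriv (expPair A B r s) x
      = β * expPair A B r s x := by
  simp only [deriv_expPair, expPair]
  linear_combination A * exp (r * x) * hr + B * exp (s * x) * hs

end ExpPair

lemma add_sqrt_div_two_sq {p β s : ℝ} (hs : s ^ 2 = p ^ 2 + 4 * β) :
    ((p + s) / 2) ^ 2 = p * ((p + s) / 2) + β := by
  linear_combination hs / 4

lemma abs_lt_sqrt_sq_add {p β : ℝ} (hβ : 0 < β) : |p| < √(p ^ 2 + 4 * β) :=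
  (Real.lt_sqrt (abs_nonneg p)).2 (by rw [sq_abs]; linarith)

lemma danckwerts_denominator_pos {Pe r₁ r₂ E : ℝ} (hPe : 0 < Pe) (hr₁ : 0 < r₁) (hr₂ : r₂ ≤ 0)
    (hE₀ : 0 ≤ E) (hE₁ : E ≤ 1) : 0 < Pe - Pe * (r₂ / r₁) * E - r₂ + r₂ * E := by
  have hratio : r₂ / r₁ * E ≤ 0 :=
    mul_nonpos_of_nonpos_of_nonneg (div_nonpos_of_nonpos_of_nonneg hr₂ hr₁.le) hE₀
  nlinarith

/-- Quantized-method bulk gas concentration profile for a first-order gas–solid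
reaction in a packed bed with axial dispersion: `Y` satisfies the axial
dispersion equation with Danckwerts inlet condition and zero outlet gradient. -/
theorem stmt12 (Pe β Λ aₛ : ℝ) (hPe : 0 < Pe) (hβ : 0 < β) (hΛ : 0 < Λ)
    (r₁ r₂ E D : ℝ)
    (hr₁ : r₁ = (Pe + Real.sqrt (Pe ^ 2 + 4 * β)) / 2)
    (hr₂ : r₂ = (Pe - Real.sqrt (Pe ^ 2 + 4 * β)) / 2)
    (hE : E = Real.exp ((r₂ - r₁) * Λ))
    (hD : D = Pe - Pe * (r₂ / r₁) * E - r₂ + r₂ * E)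
    (Y : ℝ → ℝ)
    (hY : ∀ η, Y η = (Pe * (1 - aₛ) / D) *
        (Real.exp (r₂ * η) - (r₂ / r₁) * E * Real.exp (r₁ * η)) + aₛ) :
    (0 < r₁ ∧ r₂ < 0) ∧
    0 < D ∧
    (∀ η : ℝ, deriv (deriv Y) η - Pe * deriv Y η = β * (Y η - aₛ)) ∧
    Y 0 - (1 / Pe) * deriv Y 0 = 1 ∧
    deriv Y Λ = 0 := by
  have hs : √(Pe ^ 2 + 4 * β) ^ 2 = Pe ^ 2 + 4 * β := sq_sqrt (by positivity)
  obtain ⟨hs₁, hs₂⟩ := abs_lt.1 (abs_lt_sqrt_sq_add (p := Pe) hβ)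
  have hr₁pos : 0 < r₁ := by rw [hr₁]; linarith
  have hr₂neg : r₂ < 0 := by rw [hr₂]; linarith
  have hq₁ : r₁ ^ 2 = Pe * r₁ + β := hr₁ ▸ add_sqrt_div_two_sq hs
  have hq₂ : r₂ ^ 2 = Pe * r₂ + β := by
    rw [hr₂, sub_eq_add_neg]; exact add_sqrt_div_two_sq (by rw [neg_sq]; exact hs)
  have hE₁ : E ≤ 1 := by rw [hE, exp_le_one_iff]; nlinarith
  have hDpos : 0 < D :=
    hD ▸ danckwerts_denominator_pos hPe hr₁pos hr₂neg.le (hE ▸ (exp_pos _).le) hE₁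
  set C := Pe * (1 - aₛ) / D
  have hCD : C * D = Pe * (1 - aₛ) := div_mul_cancel₀ _ hDpos.ne'
  set K := r₂ / r₁ * E
  have hK : K * r₁ = r₂ * E := by
    show r₂ / r₁ * E * r₁ = r₂ * E
    rw [div_mul_eq_mul_div, div_mul_cancel₀ _ hr₁pos.ne']
  have hDK : D = Pe - Pe * K - r₂ + r₂ * E := by rw [hD]; ring
  have hYeq : Y = fun η => expPair C (-(C * K)) r₂ r₁ η + aₛ := by
    funext η; rw [hY, expPair]; ring
  have hY' : deriv Y = deriv (expPair C (-(C * K)) r₂ r₁) := by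
    rw [hYeq, deriv_add_const']
  refine ⟨⟨hr₁pos, hr₂neg⟩, hDpos, fun η => ?_, ?_, ?_⟩
  · rw [hY', hYeq, add_sub_cancel_right]
    exact deriv_deriv_expPair_sub_mul_deriv hq₂ hq₁ η
  · rw [hY, hY', deriv_expPair, expPair]
    simp only [mul_zero, exp_zero, mul_one]
    clear_value C K
    field_simp
    linear_combination C * hK + hCD - C * hDK
  · have hE_mul : E * exp (r₁ * Λ) = exp (r₂ * Λ) := by rw [hE, ← exp_add]; ring_nf
    rw [hY', deriv_expPair, expPair]
    linear_combination (-C * exp (r₁ * Λ)) * hK - C * r₂ * hE_mul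
end
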